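/- For all positive integers g and m, there exists an (m·g)-regular placement delivery array with parameters ( m(⌈g²/2⌉+g), (⌈g²/2⌉+g)^m, ⌈g²/2⌉·(⌈g²/2⌉+g)^{m−1}, (⌈g²/2⌉+g)^m ). -/

import Mathlib

/-- A `(K,F,Z,S)` placement delivery array: an `F × K` array whose entries are either `*`
(encoded as `none`) or integers in `[1:S]` (encoded as `some s` with `s : Fin S`). -/
def IsPDA (K F Z S : ℕ) (P : Fin F → Fin K → Option (Fin S)) : Prop :=
  (∀ k : Fin K, (Finset.univ.filter fun j : Fin F => P j k = none).card = Z) ∧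
  (∀ s : Fin S, ∃ (j : Fin F) (k : Fin K), P j k = some s) ∧
  (∀ (j1 j2 : Fin F) (k1 k2 : Fin K) (s : Fin S),
      P j1 k1 = some s → P j2 k2 = some s → (j1, k1) ≠ (j2, k2) →
      P j1 k2 = none ∧ P j2 k1 = none)

/-- A PDA is `g`-regular if each integer appears exactly `g` times. -/
def PDARegular (K F S g : ℕ) (P : Fin F → Fin K → Option (Fin S)) : Prop :=
  ∀ s : Fin S,
    (Finset.univ.filter fun jk : Fin F × Fin K => P jk.1 jk.2 = some s).card = g

/-- Row `i` is a star row for the integer `s`. -/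
def PDAStarRow (K F S : ℕ) (P : Fin F → Fin K → Option (Fin S)) (i : Fin F) (s : Fin S) : Prop :=
  ∀ (j : Fin F) (k : Fin K), P j k = some s → P i k = none

/-- Condition 1 with parameter `lam`. -/
def PDACondition1 (K F Z S lam : ℕ) (P : Fin F → Fin K → Option (Fin S)) : Prop :=
  lam ∣ F ∧ lam ∣ Z ∧
  (∀ (j : Fin F) (k : Fin K),
      P j k = none ↔
        P ⟨j.val % (F / lam), Nat.lt_of_le_of_lt (Nat.mod_le _ _) j.isLt⟩ k = none) ∧
  ∃ φ : Fin S → Fin (F / lam),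
    (∀ s : Fin S, PDAStarRow K F S P (Fin.castLE (Nat.div_le_self F lam) (φ s)) s) ∧
    (∀ j : Fin (F / lam), (Finset.univ.filter fun s : Fin S => φ s = j).card * F = lam * S)

/-- Condition 2: every row contains the same number of stars. -/
def PDACondition2 (K F S : ℕ) (P : Fin F → Fin K → Option (Fin S)) : Prop :=
  ∀ j1 j2 : Fin F,
    (Finset.univ.filter fun k : Fin K => P j1 k = none).card =
    (Finset.univ.filter fun k : Fin K => P j2 k = none).card

/-!
Let `q = ⌈g²/2⌉ + g`. The base array is cyclic over `ZMod q`: the integer `v` sits in the `g` cells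
`(v + c i + d i, v + c i)`, so every column has `q - g` stars and every integer occurs `g` times.
It is a PDA in which row `v` is a star row for `v` as soon as the differences `d i` are distinct,
`d i + c i - c j` is a difference only for `i = j`, and `-c i` is never a difference.
The `m`-fold power has rows `(ZMod q)^m` and columns `Fin m × ZMod q`; its entry at `(f, (i, b))`
replaces `f i` by the base entry at `(f i, b)`; a coincidence in two different coordinates is
handled by the star rows. Suitable `c, d` exist: let `c` run through `0, g-1, 1, g-2, …` and space
the `d`s as tightly as the conditions allow; this uses exactly `⌈g²/2⌉` residues.
-/

open Finset Function

def IsPDAOn {ι κ σ : Type*} [Fintype ι] (Z : ℕ) (P : ι → κ → Option σ) : Prop :=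
  (∀ k, #{j | P j k = none} = Z) ∧
  (∀ s, ∃ j k, P j k = some s) ∧
  ∀ j₁ j₂ k₁ k₂ s, P j₁ k₁ = some s → P j₂ k₂ = some s → (j₁, k₁) ≠ (j₂, k₂) →
    P j₁ k₂ = none ∧ P j₂ k₁ = none

def PDARegularOn {ι κ σ : Type*} [Fintype ι] [Fintype κ] [DecidableEq σ] (g : ℕ)
    (P : ι → κ → Option σ) : Prop :=
  ∀ s, #{jk : ι × κ | P jk.1 jk.2 = some s} = g

section Reindex

variable {ι κ σ ι' κ' σ' : Type*} [Fintype ι] [Fintype ι'] {P : ι → κ → Option σ}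

theorem IsPDAOn.reindex {Z : ℕ} (hP : IsPDAOn Z P) (eF : ι ≃ ι') (eK : κ ≃ κ') (eS : σ ≃ σ') :
    IsPDAOn Z fun j k => (P (eF.symm j) (eK.symm k)).map eS := by
  obtain ⟨hcol, hval, hpair⟩ := hP
  refine ⟨fun k => ?_, fun s => ?_, fun j₁ j₂ k₁ k₂ s h₁ h₂ hne => ?_⟩
  · rw [← hcol (eK.symm k)]
    exact card_equiv eF.symm (by simp)
  · obtain ⟨j, k, h⟩ := hval (eS.symm s)
    exact ⟨eF j, eK k, by simp [h]⟩
  · simp only [Option.map_eq_none_iff]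
    simp only [Option.map_eq_some_iff, ← eS.eq_symm_apply, exists_eq_right] at h₁ h₂
    exact hpair _ _ _ _ _ h₁ h₂ (by simpa using hne)

theorem PDARegularOn.reindex [Fintype κ] [Fintype κ'] [DecidableEq σ] [DecidableEq σ'] {g : ℕ}
    (hP : PDARegularOn g P) (eF : ι ≃ ι') (eK : κ ≃ κ') (eS : σ ≃ σ') :
    PDARegularOn g fun j k => (P (eF.symm j) (eK.symm k)).map eS := by
  intro s
  rw [← hP (eS.symm s)]
  exact card_equiv (eF.prodCongr eK).symm (by simp [← eS.eq_symm_apply])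

theorem exists_isPDA_of_isPDAOn [Fintype κ] [Fintype σ] [DecidableEq σ] {K F Z S g : ℕ}
    (hP : IsPDAOn Z P) (hR : PDARegularOn g P) (hF : Fintype.card ι = F)
    (hK : Fintype.card κ = K) (hS : Fintype.card σ = S) :
    ∃ P' : Fin F → Fin K → Option (Fin S), IsPDA K F Z S P' ∧ PDARegular K F S g P' :=
  have eF := Fintype.equivFinOfCardEq hF
  have eK := Fintype.equivFinOfCardEq hK
  have eS := Fintype.equivFinOfCardEq hS
  ⟨_, hP.reindex eF eK eS, hR.reindex eF eK eS⟩

end Reindex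

theorem Fintype.card_filter_apply {ι α : Type*} [Fintype ι] [DecidableEq ι] [Fintype α]
    [DecidableEq α] (p : α → Prop) [DecidablePred p] (i : ι) :
    #{f : ι → α | p (f i)} = #{a | p a} * card α ^ (card ι - 1) := by
  calc #{f : ι → α | p (f i)} = ∑ a ∈ {a | p a}, #{f : ι → α | f i = a} := by
        rw [card_eq_sum_card_fiberwise (f := fun f => f i) (t := {a | p a})
          fun f hf => by simpa using hf]
        refine Finset.sum_congr rfl fun a ha => ?_
        rw [filter_filter]
        refine congrArg Finset.card (filter_congr fun f _ => ?_)
        simp only [mem_filter, mem_univ, true_and] at ha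
        exact ⟨And.right, fun h => ⟨h ▸ ha, h⟩⟩
    _ = ∑ a ∈ {a | p a}, card α ^ (card ι - 1) := Finset.sum_congr rfl fun a _ => by
        simpa using card_filter_piFinset_const_eq_of_mem univ i (mem_univ a)
    _ = _ := by rw [sum_const, smul_eq_mul]

section Power

variable {α β : Type*} {A : α → β → Option α} {m : ℕ}

def pdaPow (A : α → β → Option α) (m : ℕ) : (Fin m → α) → Fin m × β → Option (Fin m → α) :=
  fun f k => (A (f k.1) k.2).map (update f k.1)

lemma pdaPow_eq_none {f : Fin m → α} {i : Fin m} {b : β} :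
    pdaPow A m f (i, b) = none ↔ A (f i) b = none :=
  Option.map_eq_none_iff

lemma pdaPow_eq_some {f s : Fin m → α} {i : Fin m} {b : β} :
    pdaPow A m f (i, b) = some s ↔ A (f i) b = some (s i) ∧ ∀ j ≠ i, f j = s j := by
  simp [pdaPow, update_eq_iff]

lemma pdaPow_update_eq_some {s : Fin m → α} {i : Fin m} {a : α} {b : β}
    (h : A a b = some (s i)) : pdaPow A m (update s i a) (i, b) = some s :=
  pdaPow_eq_some.2 ⟨by simpa, fun j hj => update_of_ne hj _ _⟩

variable [Fintype α] [DecidableEq α]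

theorem isPDAOn_pdaPow {Z : ℕ} (hA : IsPDAOn Z A)
    (hstar : ∀ {a b v}, A a b = some v → A v b = none) (hm : 0 < m) :
    IsPDAOn (Z * Fintype.card α ^ (m - 1)) (pdaPow A m) := by
  obtain ⟨hcol, hval, hpair⟩ := hA
  refine ⟨fun ⟨i, b⟩ => ?_, fun s => ?_, ?_⟩
  · simp only [pdaPow_eq_none]
    rw [Fintype.card_filter_apply (fun a => A a b = none), hcol, Fintype.card_fin]
  · obtain ⟨a, b, h⟩ := hval (s ⟨0, hm⟩)
    exact ⟨_, _, pdaPow_update_eq_some h⟩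
  · rintro f₁ f₂ ⟨i₁, b₁⟩ ⟨i₂, b₂⟩ s h₁ h₂ hne
    rw [pdaPow_eq_some] at h₁ h₂
    simp only [pdaPow_eq_none]
    obtain rfl | hi := eq_or_ne i₁ i₂
    · refine hpair _ _ _ _ _ h₁.1 h₂.1 fun h => hne ?_
      simp only [Prod.mk.injEq, true_and] at h ⊢
      refine ⟨funext fun j => ?_, h.2⟩
      obtain rfl | hj := eq_or_ne j i₁
      · exact h.1
      · rw [h₁.2 j hj, h₂.2 j hj]
    · rw [h₁.2 i₂ hi.symm, h₂.2 i₁ hi]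
      exact ⟨hstar h₂.1, hstar h₁.1⟩

theorem pdaRegularOn_pdaPow [Fintype β] {g : ℕ} (hA : PDARegularOn g A) :
    PDARegularOn (m * g) (pdaPow A m) := by
  intro s
  calc #{x : (Fin m → α) × (Fin m × β) | pdaPow A m x.1 x.2 = some s}
      = #(univ.sigma fun i => ({ab : α × β | A ab.1 ab.2 = some (s i)} : Finset _)) := by
        refine card_nbij' (fun x => ⟨x.2.1, (x.1 x.2.1, x.2.2)⟩)
          (fun y => (update s y.1 y.2.1, (y.1, y.2.2))) ?_ ?_ ?_ ?_
        · rintro ⟨f, i, b⟩ h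
          simpa using (pdaPow_eq_some.1 (by simpa using h)).1
        · rintro ⟨i, a, b⟩ h
          simpa using pdaPow_update_eq_some (by simpa using h)
        · rintro ⟨f, i, b⟩ h
          have hoff := (pdaPow_eq_some.1 (by simpa using h)).2
          simpa [update_eq_iff] using fun j hj => (hoff j hj).symm
        · rintro ⟨i, a, b⟩ _
          simp
    _ = m * g := by simp [card_sigma, hA _]

end Power

structure CyclicBase (q g : ℕ) where
  c : Fin g → ZMod q
  d : Fin g → ZMod q
  injective_d : Injective d
  eq_of_add_sub_eq : ∀ i j k, d i + c i - c j = d k → i = j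
  neg_ne : ∀ i k, -c i ≠ d k

namespace CyclicBase

variable {q g : ℕ} (B : CyclicBase q g) {a b v : ZMod q}

/-- The integer `v` is placed in the cells `(v + c i + d i, v + c i)`. -/
noncomputable def array (a b : ZMod q) : Option (ZMod q) :=
  (partialInv B.d (a - b)).map fun i => b - B.c i

lemma array_eq_some : B.array a b = some v ↔ ∃ i, a = v + B.c i + B.d i ∧ b = v + B.c i := by
  simp only [array, Option.map_eq_some_iff, B.injective_d.isPartialInv _ _]
  refine exists_congr fun i => ⟨?_, ?_⟩
  · rintro ⟨h, rfl⟩; exact ⟨by linear_combination -h, by ring⟩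
  · rintro ⟨rfl, rfl⟩; constructor <;> ring

lemma array_eq_none : B.array a b = none ↔ ∀ i, B.d i ≠ a - b := by
  simp [array, partialInv]

lemma array_eq_none_of_eq_some (h : B.array a b = some v) : B.array v b = none := by
  obtain ⟨i, -, rfl⟩ := B.array_eq_some.1 h
  exact B.array_eq_none.2 fun k hk => B.neg_ne i k (by rw [hk]; ring)

variable [NeZero q]

lemma card_array_eq_none (b : ZMod q) : #{a | B.array a b = none} = q - g := by
  have hsome : ({a | ¬B.array a b = none} : Finset _) = univ.image fun i => b + B.d i := by
    ext a
    simp [array_eq_none, eq_sub_iff_add_eq']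
  have := card_filter_add_card_filter_not (s := univ) fun a => B.array a b = none
  rw [hsome, card_image_of_injective _ fun i j h => B.injective_d (add_left_cancel h), card_univ,
    card_univ, Fintype.card_fin, ZMod.card] at this
  omega

lemma pdaRegularOn : PDARegularOn g B.array := by
  intro v
  have hset : ({ab | B.array ab.1 ab.2 = some v} : Finset _) =
      univ.image fun i => (v + B.c i + B.d i, v + B.c i) := by
    ext ⟨a, b⟩
    simp [array_eq_some, eq_comm]
  rw [hset, card_image_of_injective, card_univ, Fintype.card_fin]
  intro i j h
  simp only [Prod.mk.injEq] at h
  exact B.injective_d (by linear_combination h.1 - h.2)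

lemma isPDAOn (hg : 0 < g) : IsPDAOn (q - g) B.array := by
  refine ⟨B.card_array_eq_none, fun v => ⟨_, _, B.array_eq_some.2 ⟨⟨0, hg⟩, rfl, rfl⟩⟩, ?_⟩
  have key {a₁ a₂ b₁ b₂ v} (h₁ : B.array a₁ b₁ = some v) (h₂ : B.array a₂ b₂ = some v)
      (hne : (a₁, b₁) ≠ (a₂, b₂)) : B.array a₁ b₂ = none := by
    obtain ⟨i, rfl, rfl⟩ := B.array_eq_some.1 h₁
    obtain ⟨j, rfl, rfl⟩ := B.array_eq_some.1 h₂
    refine B.array_eq_none.2 fun k hk => hne ?_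
    obtain rfl := B.eq_of_add_sub_eq i j k (by rw [hk]; ring)
    rfl
  exact fun _ _ _ _ _ h₁ h₂ hne => ⟨key h₁ h₂ hne, key h₂ h₁ hne.symm⟩

end CyclicBase

section Gaps

variable {g : ℕ} {c d : ℕ → ℕ}

lemma strictMonoOn_of_add_lt (hlo : ∀ t, t + 1 < g → d t + c t < d (t + 1)) :
    StrictMonoOn d (Set.Iio g) :=
  (strictMonoOn_Iic_of_lt_succ (n := g - 1) fun t ht => by
    have := hlo t (by omega)
    rw [Order.succ_eq_add_one]
    omega).mono fun t ht => by simp only [Set.mem_Iio, Set.mem_Iic] at ht ⊢; omega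

lemma eq_of_add_eq_add_of_gaps (hc : ∀ t < g, ∀ t' < g, c t = c t' → t = t')
    (hcg : ∀ t < g, c t < g) (hlo : ∀ t, t + 1 < g → d t + c t < d (t + 1))
    (hhi : ∀ t, t + 1 < g → d t + g ≤ d (t + 1) + c (t + 1))
    {i j k : ℕ} (hi : i < g) (hj : j < g) (hk : k < g) (h : d i + c i = d k + c j) : i = j := by
  have hmono := (strictMonoOn_of_add_lt hlo).monotoneOn
  rcases lt_trichotomy i k with hik | rfl | hki
  · have := hmono (show i + 1 < g by omega) hk hik
    have := hlo i (by omega)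
    omega
  · exact hc i hi j hj (by omega)
  · have := hmono hk (show i - 1 < g by omega) (show k ≤ i - 1 by omega)
    have := hhi (i - 1) (by omega)
    rw [Nat.sub_add_cancel (by omega)] at this
    have := hcg j hj
    omega

end Gaps

/- With `c = zigzagShift g` listing `0, g-1, 1, g-2, …`, the step `zigzagDiff g (t + 1) -
zigzagDiff g t` is the least gap `max (c t) (g - 1 - c (t + 1)) + 1` allowed by
`eq_of_add_eq_add_of_gaps`. -/
def zigzagShift (g t : ℕ) : ℕ := if t % 2 = 0 then t / 2 else g - 1 - t / 2

def zigzagDiff (g t : ℕ) : ℕ := if t % 2 = 0 then 1 + t / 2 * (g + 1) else 2 + t / 2 * (g + 2)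

section Zigzag

variable {g t : ℕ}

lemma zigzagShift_two_mul (g s : ℕ) : zigzagShift g (2 * s) = s := by simp [zigzagShift]

lemma zigzagShift_two_mul_add_one (g s : ℕ) : zigzagShift g (2 * s + 1) = g - 1 - s := by
  simp [zigzagShift]; omega

lemma zigzagDiff_two_mul (g s : ℕ) : zigzagDiff g (2 * s) = 1 + s * (g + 1) := by
  simp [zigzagDiff]

lemma zigzagDiff_two_mul_add_one (g s : ℕ) : zigzagDiff g (2 * s + 1) = 2 + s * (g + 2) := by
  simp [zigzagDiff]; omega

lemma zigzagShift_lt (ht : t < g) : zigzagShift g t < g := by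
  unfold zigzagShift; split <;> omega

lemma zigzagShift_injOn {t' : ℕ} (ht : t < g) (ht' : t' < g)
    (h : zigzagShift g t = zigzagShift g t') : t = t' := by
  unfold zigzagShift at h; split at h <;> split at h <;> omega

lemma one_le_zigzagDiff : 1 ≤ zigzagDiff g t := by
  unfold zigzagDiff; split <;> omega

lemma zigzagDiff_add_zigzagShift_lt (ht : t + 1 < g) :
    zigzagDiff g t + zigzagShift g t < zigzagDiff g (t + 1) := by
  rcases Nat.even_or_odd' t with ⟨s, rfl | rfl⟩
  · rw [zigzagDiff_two_mul, zigzagShift_two_mul, zigzagDiff_two_mul_add_one]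
    ring_nf; omega
  · rw [zigzagDiff_two_mul_add_one, zigzagShift_two_mul_add_one,
      show 2 * s + 1 + 1 = 2 * (s + 1) by ring, zigzagDiff_two_mul]
    ring_nf; omega

lemma zigzagDiff_add_le (ht : t + 1 < g) :
    zigzagDiff g t + g ≤ zigzagDiff g (t + 1) + zigzagShift g (t + 1) := by
  rcases Nat.even_or_odd' t with ⟨s, rfl | rfl⟩
  · rw [zigzagDiff_two_mul, zigzagShift_two_mul_add_one, zigzagDiff_two_mul_add_one]
    ring_nf; omega
  · rw [zigzagDiff_two_mul_add_one, show 2 * s + 1 + 1 = 2 * (s + 1) by ring, zigzagDiff_two_mul,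
      zigzagShift_two_mul]
    ring_nf; omega

lemma strictMonoOn_zigzagDiff : StrictMonoOn (zigzagDiff g) (Set.Iio g) :=
  strictMonoOn_of_add_lt fun _ => zigzagDiff_add_zigzagShift_lt

lemma zigzagDiff_sub_one_le (hg : 0 < g) : zigzagDiff g (g - 1) ≤ (g ^ 2 + 1) / 2 := by
  rw [Nat.le_div_iff_mul_le two_pos]
  rcases Nat.even_or_odd' g with ⟨a, rfl | rfl⟩
  · obtain ⟨a, rfl⟩ := Nat.exists_eq_add_one_of_ne_zero (by omega : a ≠ 0)
    rw [show 2 * (a + 1) - 1 = 2 * a + 1 by omega, zigzagDiff_two_mul_add_one]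
    ring_nf; omega
  · rw [Nat.add_sub_cancel, zigzagDiff_two_mul]
    ring_nf; omega

lemma zigzagDiff_le (ht : t < g) : zigzagDiff g t ≤ (g ^ 2 + 1) / 2 :=
  (strictMonoOn_zigzagDiff.monotoneOn ht (show g - 1 < g by omega) (by omega)).trans
    (zigzagDiff_sub_one_le (by omega))

end Zigzag

lemma natCast_eq_natCast_of_lt {q a b : ℕ} (h : (a : ZMod q) = b) (ha : a < q) (hb : b < q) :
    a = b := by
  rwa [ZMod.natCast_eq_natCast_iff', Nat.mod_eq_of_lt ha, Nat.mod_eq_of_lt hb] at h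

def zigzagBase (g : ℕ) : CyclicBase ((g ^ 2 + 1) / 2 + g) g where
  c t := zigzagShift g t
  d t := zigzagDiff g t
  injective_d i j h := Fin.ext <| strictMonoOn_zigzagDiff.injOn i.2 j.2 <|
    natCast_eq_natCast_of_lt h (by have := zigzagDiff_le i.2; have := i.2; omega)
      (by have := zigzagDiff_le j.2; have := j.2; omega)
  eq_of_add_sub_eq i j k h := Fin.ext <| eq_of_add_eq_add_of_gaps
    (fun _ ht _ ht' => zigzagShift_injOn ht ht') (fun _ => zigzagShift_lt)
    (fun _ => zigzagDiff_add_zigzagShift_lt) (fun _ => zigzagDiff_add_le) i.2 j.2 k.2 <|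
    natCast_eq_natCast_of_lt (a := zigzagDiff g i + zigzagShift g i)
      (b := zigzagDiff g k + zigzagShift g j) (by push_cast; linear_combination h)
      (by have := zigzagDiff_le i.2; have := zigzagShift_lt i.2; omega)
      (by have := zigzagDiff_le k.2; have := zigzagShift_lt j.2; omega)
  neg_ne i k h := by
    have := natCast_eq_natCast_of_lt (a := zigzagDiff g k + zigzagShift g i) (b := 0)
      (by push_cast; linear_combination -h)
      (by have := zigzagDiff_le k.2; have := zigzagShift_lt i.2; omega) (by have := k.2; omega)
    have := one_le_zigzagDiff (g := g) (t := k)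
    omega

/-- Theorem 3 / Scheme B: for all positive integers `g` and `m`, there exists an
`(m·g)`-regular PDA with parameters
`(m(⌈g²/2⌉+g), (⌈g²/2⌉+g)^m, ⌈g²/2⌉·(⌈g²/2⌉+g)^(m-1), (⌈g²/2⌉+g)^m)`.
Here `⌈g²/2⌉ = (g^2+1)/2` in natural-number arithmetic. -/
theorem multibs (g m : ℕ) (hg : 0 < g) (hm : 0 < m) :
    ∃ P : Fin (((g ^ 2 + 1) / 2 + g) ^ m) → Fin (m * ((g ^ 2 + 1) / 2 + g)) →
          Option (Fin (((g ^ 2 + 1) / 2 + g) ^ m)),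
      IsPDA (m * ((g ^ 2 + 1) / 2 + g)) (((g ^ 2 + 1) / 2 + g) ^ m)
        ((g ^ 2 + 1) / 2 * ((g ^ 2 + 1) / 2 + g) ^ (m - 1))
        (((g ^ 2 + 1) / 2 + g) ^ m) P ∧
      PDARegular (m * ((g ^ 2 + 1) / 2 + g)) (((g ^ 2 + 1) / 2 + g) ^ m)
        (((g ^ 2 + 1) / 2 + g) ^ m) (m * g) P := by
  have : NeZero ((g ^ 2 + 1) / 2 + g) := ⟨by omega⟩
  have hP := isPDAOn_pdaPow ((zigzagBase g).isPDAOn hg) (zigzagBase g).array_eq_none_of_eq_some hm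
  rw [ZMod.card, Nat.add_sub_cancel] at hP
  exact exists_isPDA_of_isPDAOn hP (pdaRegularOn_pdaPow (zigzagBase g).pdaRegularOn)
    (by simp) (by simp) (by simp)
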